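/- For all real d×d matrices A, B and every real s ≥ 0, the singular value function satisfies φ^s(AB) ≤ φ^s(A)·φ^s(B). -/

import Mathlib

open scoped BigOperators

/-- `sval A k` : the (k+1)-st largest singular value of `A`, i.e. the square roots of the
eigenvalues of `Aᵀ * A` listed in decreasing order (0-indexed). -/
noncomputable def sval {d : ℕ} (A : Matrix (Fin d) (Fin d) ℝ) (k : Fin d) : ℝ :=
  (fun i => Real.sqrt ((Matrix.isHermitian_iff_isSymm.2 (Matrix.isSymm_transpose_mul_self A)).eigenvalues i))
    (Tuple.sort (fun i => Real.sqrt ((Matrix.isHermitian_iff_isSymm.2 (Matrix.isSymm_transpose_mul_self A)).eigenvalues i)) k.rev)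

/-- `svalNat A k` : the k-th singular value with 0-based natural index, 0 out of range. -/
noncomputable def svalNat {d : ℕ} (A : Matrix (Fin d) (Fin d) ℝ) (k : ℕ) : ℝ :=
  if h : k < d then sval A ⟨k, h⟩ else 0

/-- The singular value function φ^s: for 0 ≤ s ≤ d it is α_1(A)⋯α_{⌊s⌋}(A)·α_{⌈s⌉}(A)^{s-⌊s⌋},
and |det A|^{s/d} for s ≥ d. -/
noncomputable def phi {d : ℕ} (s : ℝ) (A : Matrix (Fin d) (Fin d) ℝ) : ℝ :=
  if s ≤ d then
    (∏ i ∈ Finset.range ⌊s⌋₊, svalNat A i) * (svalNat A (⌈s⌉₊ - 1)) ^ (s - (⌊s⌋₊ : ℝ))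
  else |A.det| ^ (s / (d : ℝ))

/-- The ℓ² (Euclidean) operator norm of a matrix. -/
noncomputable def opNorm {n : Type*} [Fintype n] [DecidableEq n] (A : Matrix n n ℝ) : ℝ :=
  ‖(Matrix.toEuclideanLin A).toContinuousLinearMap‖

/-- The k-th compound matrix of `A`: the matrix of the k-th exterior power `A^{∧k}` in the
orthonormal basis `e_{i₁} ∧ ⋯ ∧ e_{i_k}` (i₁ < ⋯ < i_k) of `∧^k ℝ^d` with the induced inner
product. Rows/columns are indexed by k-element subsets of `Fin d`. -/
noncomputable def compound {d : ℕ} (A : Matrix (Fin d) (Fin d) ℝ) (k : ℕ) :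
    Matrix {s : Finset (Fin d) // s.card = k} {s : Finset (Fin d) // s.card = k} ℝ :=
  fun S T => (Matrix.of fun i j : Fin k =>
    A ((S.1.orderIsoOfFin S.2 i : Fin d)) ((T.1.orderIsoOfFin T.2 j : Fin d))).det

/-!
The `k`-th compound matrix `C_k(A)` is the matrix of `⋀^k A` in the basis of wedges of standard
basis vectors, so `C_k(AB) = C_k(A) C_k(B)`. Diagonalising `AᵀA = V D Vᵀ` with `V` orthogonal,
`C_k(A)ᵀ C_k(A) = C_k(V) C_k(D) C_k(V)ᵀ` with `C_k(V)` orthogonal and `C_k(D)` diagonal with entries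
the `k`-fold products of eigenvalues of `AᵀA`; hence `‖C_k(A)‖ = α₁(A)⋯α_k(A) =: P_k(A)` and `P_k`
is submultiplicative. For `k = ⌊s⌋ ≤ s ≤ d` and `θ = s - k` one has
`φ^s = P_k^(1-θ) P_(k+1)^θ`, which inherits submultiplicativity; for `s > d` it is that of `|det|`.
-/

open Finset Matrix
open scoped Matrix.Norms.L2Operator

theorem Finset.prod_le_prod_range_card {R : Type*} [CommMonoidWithZero R] [PartialOrder R]
    [ZeroLEOneClass R] [PosMulMono R] [MulPosMono R] {f : ℕ → R} (hf : Antitone f)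
    (hf0 : ∀ n, 0 ≤ f n) (s : Finset ℕ) : ∏ n ∈ s, f n ≤ ∏ i ∈ range #s, f i := by
  induction s using Finset.induction_on_max with
  | empty => simp
  | insert a s hlt ih =>
    have has : a ∉ s := fun h => lt_irrefl a (hlt a h)
    have hcard : #s ≤ a := by simpa using card_le_card fun x hx => mem_range.2 (hlt x hx)
    rw [prod_insert has, card_insert_of_notMem has, prod_range_succ, mul_comm]
    exact mul_le_mul ih (hf hcard) (hf0 a) (prod_nonneg fun i _ => hf0 i)

theorem pi_norm_prod_subsets_eq_prod_range {d k : ℕ} (hk : k ≤ d) {f : ℕ → ℝ} (hf : Antitone f)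
    (hf0 : ∀ n, 0 ≤ f n) (e : Equiv.Perm (Fin d)) :
    ‖fun S : {s : Finset (Fin d) // s.card = k} => ∏ x ∈ S.1, f (e x)‖ = ∏ i ∈ range k, f i := by
  refine le_antisymm ((pi_norm_le_iff_of_nonneg (prod_nonneg fun _ _ => hf0 _)).2 fun S => ?_) ?_
  · let ι : Fin d ↪ ℕ := e.toEmbedding.trans Fin.valEmbedding
    calc ‖∏ x ∈ S.1, f (e x)‖ = ∏ n ∈ S.1.map ι, f n := by
          rw [Real.norm_of_nonneg (prod_nonneg fun _ _ => hf0 _), prod_map]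
          rfl
      _ ≤ ∏ i ∈ range k, f i := by
          simpa [S.2] using prod_le_prod_range_card hf hf0 (S.1.map ι)
  · let S₀ : {s : Finset (Fin d) // s.card = k} :=
      ⟨univ.map ((Fin.castLEEmb hk).trans e.symm.toEmbedding), by simp⟩
    calc ∏ i ∈ range k, f i = ∏ x ∈ S₀.1, f (e x) := by
          simp [S₀, prod_map, Fin.prod_univ_eq_prod_range f k]
      _ ≤ _ := (Real.le_norm_self _).trans
          (norm_le_pi_norm (fun S : {s : Finset (Fin d) // s.card = k} => ∏ x ∈ S.1, f (e x)) S₀)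

theorem rpow_mul_rpow_le_of_le_mul {a₁ a₂ b₁ b₂ c₁ c₂ θ : ℝ} (ha₁ : 0 ≤ a₁) (ha₂ : 0 ≤ a₂)
    (hb₁ : 0 ≤ b₁) (hb₂ : 0 ≤ b₂) (hc₁ : 0 ≤ c₁) (hc₂ : 0 ≤ c₂) (hθ₀ : 0 ≤ θ) (hθ₁ : θ ≤ 1)
    (h₁ : a₁ ≤ b₁ * c₁) (h₂ : a₂ ≤ b₂ * c₂) :
    a₁ ^ (1 - θ) * a₂ ^ θ ≤ (b₁ ^ (1 - θ) * b₂ ^ θ) * (c₁ ^ (1 - θ) * c₂ ^ θ) :=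
  calc a₁ ^ (1 - θ) * a₂ ^ θ ≤ (b₁ * c₁) ^ (1 - θ) * (b₂ * c₂) ^ θ := by gcongr
    _ = (b₁ ^ (1 - θ) * b₂ ^ θ) * (c₁ ^ (1 - θ) * c₂ ^ θ) := by
        rw [Real.mul_rpow hb₁ hc₁, Real.mul_rpow hb₂ hc₂]
        ring

section Compound

variable {d : ℕ}

def powersetCardEquiv (d k : ℕ) :
    {s : Finset (Fin d) // s.card = k} ≃ Set.powersetCard (Fin d) k :=
  Equiv.subtypeEquivRight fun _ => Set.powersetCard.mem_iff.symm

theorem compound_eq_toMatrix_exteriorPower_map (A : Matrix (Fin d) (Fin d) ℝ) (k : ℕ) :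
    compound A k = (LinearMap.toMatrix ((Pi.basisFun ℝ (Fin d)).exteriorPower k)
      ((Pi.basisFun ℝ (Fin d)).exteriorPower k) (exteriorPower.map k (toLin' A))).submatrix
        (powersetCardEquiv d k) (powersetCardEquiv d k) := by
  ext S T
  rw [compound, ← det_transpose]
  simp only [submatrix_apply, LinearMap.toMatrix_apply, exteriorPower.basis_repr_apply,
    exteriorPower.basis_apply, exteriorPower.ιMulti_family, exteriorPower.map_apply_ιMulti,
    exteriorPower.ιMultiDual_apply_ιMulti]
  congr 1
  ext i j
  simp [powersetCardEquiv, Set.powersetCard.ofFinEmbEquiv_symm_apply,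
    Finset.coe_orderIsoOfFin_apply, toLin'_apply, mulVec_single]

theorem compound_mul (A B : Matrix (Fin d) (Fin d) ℝ) (k : ℕ) :
    compound (A * B) k = compound A k * compound B k := by
  simp only [compound_eq_toMatrix_exteriorPower_map, toLin'_mul, exteriorPower.map_comp,
    LinearMap.toMatrix_comp _ ((Pi.basisFun ℝ (Fin d)).exteriorPower k), submatrix_mul_equiv]

theorem compound_one (k : ℕ) : compound (1 : Matrix (Fin d) (Fin d) ℝ) k = 1 := by
  simp only [compound_eq_toMatrix_exteriorPower_map, toLin'_one, exteriorPower.map_id,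
    LinearMap.toMatrix_id, submatrix_one_equiv]

theorem compound_conjTranspose (A : Matrix (Fin d) (Fin d) ℝ) (k : ℕ) :
    compound Aᴴ k = (compound A k)ᴴ := by
  simp only [conjTranspose_eq_transpose_of_trivial]
  ext S T
  exact det_transpose _

theorem compound_diagonal (f : Fin d → ℝ) (k : ℕ) :
    compound (diagonal f) k =
      diagonal fun S : {s : Finset (Fin d) // s.card = k} => ∏ x ∈ S.1, f x := by
  ext S T
  rw [compound]
  obtain rfl | hST := eq_or_ne S T
  · have hdiag : (of fun i j : Fin k =>
          diagonal f (S.1.orderIsoOfFin S.2 i : Fin d) (S.1.orderIsoOfFin S.2 j))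
        = diagonal fun i => f (S.1.orderIsoOfFin S.2 i) :=
      submatrix_diagonal f _ (Subtype.val_injective.comp (S.1.orderIsoOfFin S.2).injective)
    rw [hdiag, det_diagonal, diagonal_apply_eq]
    exact ((S.1.orderIsoOfFin S.2).toEquiv.prod_comp fun x => f x).trans (prod_coe_sort S.1 f)
  · obtain ⟨x, hxS, hxT⟩ : ∃ x ∈ S.1, x ∉ T.1 := by
      by_contra! h
      exact hST (Subtype.ext (eq_of_subset_of_card_le h (by rw [S.2, T.2])))
    rw [diagonal_apply_ne _ hST]
    apply det_eq_zero_of_row_eq_zero ((S.1.orderIsoOfFin S.2).symm ⟨x, hxS⟩)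
    intro j
    rw [of_apply, OrderIso.apply_symm_apply, diagonal_apply_ne]
    rintro rfl
    exact hxT (T.1.orderIsoOfFin T.2 j).2

theorem compound_mem_unitaryGroup {V : Matrix (Fin d) (Fin d) ℝ}
    (hV : V ∈ unitaryGroup (Fin d) ℝ) (k : ℕ) : compound V k ∈ unitaryGroup _ ℝ := by
  rw [mem_unitaryGroup_iff, star_eq_conjTranspose, ← compound_conjTranspose, ← compound_mul,
    ← star_eq_conjTranspose, mem_unitaryGroup_iff.1 hV, compound_one]

theorem norm_compound_mul_self {A V : Matrix (Fin d) (Fin d) ℝ} {μ : Fin d → ℝ}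
    (hV : V ∈ unitaryGroup (Fin d) ℝ) (hA : Aᴴ * A = V * diagonal μ * star V) (k : ℕ) :
    ‖compound A k‖ * ‖compound A k‖ =
      ‖fun S : {s : Finset (Fin d) // s.card = k} => ∏ x ∈ S.1, μ x‖ := by
  have hCV := compound_mem_unitaryGroup hV k
  rw [← l2_opNorm_conjTranspose_mul_self, ← compound_conjTranspose, ← compound_mul, hA,
    compound_mul, compound_mul, star_eq_conjTranspose, compound_conjTranspose,
    ← star_eq_conjTranspose, Matrix.mul_assoc, CStarRing.norm_mem_unitary_mul _ hCV,
    CStarRing.norm_mul_mem_unitary _ (Unitary.star_mem hCV), compound_diagonal,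
    l2_opNorm_diagonal]

end Compound

section SingularValues

variable {d : ℕ}

theorem isHermitian_transpose_mul_self (A : Matrix (Fin d) (Fin d) ℝ) : (Aᵀ * A).IsHermitian :=
  isHermitian_iff_isSymm.2 (isSymm_transpose_mul_self A)

theorem svalNat_nonneg (A : Matrix (Fin d) (Fin d) ℝ) (n : ℕ) : 0 ≤ svalNat A n := by
  unfold svalNat
  split
  · exact Real.sqrt_nonneg _
  · exact le_rfl

theorem svalNat_of_le (A : Matrix (Fin d) (Fin d) ℝ) {n : ℕ} (h : d ≤ n) : svalNat A n = 0 :=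
  dif_neg h.not_gt

theorem svalNat_val (A : Matrix (Fin d) (Fin d) ℝ) (i : Fin d) : svalNat A i = sval A i :=
  dif_pos i.2

theorem svalNat_antitone (A : Matrix (Fin d) (Fin d) ℝ) : Antitone (svalNat A) := by
  intro i j hij
  by_cases hj : j < d
  · rw [svalNat, dif_pos hj, svalNat, dif_pos (hij.trans_lt hj)]
    exact Tuple.monotone_sort (fun x => √((isHermitian_transpose_mul_self A).eigenvalues x))
      (Fin.rev_le_rev.2 (show (⟨i, _⟩ : Fin d) ≤ ⟨j, hj⟩ from hij))
  · rw [svalNat_of_le A (not_lt.1 hj)]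
    exact svalNat_nonneg A i

theorem exists_perm_sqrt_eigenvalues_eq_svalNat {A : Matrix (Fin d) (Fin d) ℝ}
    (hA : (Aᵀ * A).IsHermitian) :
    ∃ e : Equiv.Perm (Fin d), ∀ x, √(hA.eigenvalues x) = svalNat A (e x) := by
  let σ := Tuple.sort fun x => √(hA.eigenvalues x)
  refine ⟨σ.symm.trans Fin.revPerm, fun x => ?_⟩
  rw [Equiv.trans_apply, Fin.revPerm_apply, svalNat_val]
  show _ = √(hA.eigenvalues (σ (σ.symm x).rev.rev))
  rw [Fin.rev_rev, Equiv.apply_symm_apply]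

theorem norm_compound (A : Matrix (Fin d) (Fin d) ℝ) {k : ℕ} (hk : k ≤ d) :
    ‖compound A k‖ = ∏ i ∈ range k, svalNat A i := by
  have hAA := isHermitian_transpose_mul_self A
  obtain ⟨e, he⟩ := exists_perm_sqrt_eigenvalues_eq_svalNat hAA
  have hμ : hAA.eigenvalues = fun x => svalNat A (e x) ^ 2 := funext fun x => by
    rw [← he]
    exact (Real.sq_sqrt (eigenvalues_conjTranspose_mul_self_nonneg A x)).symm
  have hspec : Aᴴ * A = hAA.eigenvectorUnitary * diagonal (fun x => svalNat A (e x) ^ 2) *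
      star (hAA.eigenvectorUnitary : Matrix (Fin d) (Fin d) ℝ) := by
    simpa [hμ, RCLike.ofReal_real_eq_id, conjTranspose_eq_transpose_of_trivial]
      using hAA.spectral_theorem
  have hsq := norm_compound_mul_self hAA.eigenvectorUnitary.2 hspec k
  have hanti : Antitone fun n => svalNat A n ^ 2 := fun i j hij =>
    pow_le_pow_left₀ (svalNat_nonneg A j) (svalNat_antitone A hij) 2
  rw [pi_norm_prod_subsets_eq_prod_range hk hanti (fun n => sq_nonneg _) e, prod_pow, sq] at hsq
  exact (mul_self_inj (norm_nonneg _) (prod_nonneg fun i _ => svalNat_nonneg A i)).1 hsq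

theorem prod_svalNat_mul_le (A B : Matrix (Fin d) (Fin d) ℝ) (k : ℕ) :
    ∏ i ∈ range k, svalNat (A * B) i ≤
      (∏ i ∈ range k, svalNat A i) * ∏ i ∈ range k, svalNat B i := by
  by_cases hk : k ≤ d
  · rw [← norm_compound (A * B) hk, ← norm_compound A hk, ← norm_compound B hk, compound_mul]
    exact l2_opNorm_mul _ _
  · rw [prod_eq_zero (mem_range.2 (not_le.1 hk)) (svalNat_of_le (A * B) le_rfl)]
    exact mul_nonneg (prod_nonneg fun i _ => svalNat_nonneg A i)
      (prod_nonneg fun i _ => svalNat_nonneg B i)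

theorem phi_eq_of_le (A : Matrix (Fin d) (Fin d) ℝ) {s : ℝ} (hs : 0 ≤ s) (hsd : s ≤ d) :
    phi s A = (∏ i ∈ range ⌊s⌋₊, svalNat A i) ^ (1 - (s - ⌊s⌋₊)) *
      (∏ i ∈ range (⌊s⌋₊ + 1), svalNat A i) ^ (s - ⌊s⌋₊) := by
  have hP := prod_nonneg fun i (_ : i ∈ range ⌊s⌋₊) => svalNat_nonneg A i
  have hceil : svalNat A (⌈s⌉₊ - 1) ^ (s - ⌊s⌋₊) = svalNat A ⌊s⌋₊ ^ (s - ⌊s⌋₊) := by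
    obtain hθ | hθ := eq_or_ne (s - ⌊s⌋₊) 0
    · simp only [hθ, Real.rpow_zero]
    · have hlt : ⌊s⌋₊ < ⌈s⌉₊ :=
        Nat.lt_ceil.2 ((Nat.floor_le hs).lt_of_ne fun h => hθ (sub_eq_zero.2 h.symm))
      rw [show ⌈s⌉₊ - 1 = ⌊s⌋₊ by have := Nat.ceil_le_floor_add_one s; omega]
  rw [phi, if_pos hsd, hceil, prod_range_succ, Real.mul_rpow hP (svalNat_nonneg A _), ← mul_assoc,
    ← Real.rpow_add' hP (by norm_num), sub_add_cancel, Real.rpow_one]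

end SingularValues

/-- the singular value function is submultiplicative: φ^s(AB) ≤ φ^s(A)·φ^s(B). -/
theorem phi_submultiplicative
    {d : ℕ} (A B : Matrix (Fin d) (Fin d) ℝ) (s : ℝ) (hs : 0 ≤ s) :
    phi s (A * B) ≤ phi s A * phi s B := by
  by_cases hsd : s ≤ d
  · have hP := fun (M : Matrix (Fin d) (Fin d) ℝ) k =>
      prod_nonneg fun i (_ : i ∈ range k) => svalNat_nonneg M i
    rw [phi_eq_of_le _ hs hsd, phi_eq_of_le _ hs hsd, phi_eq_of_le _ hs hsd]
    exact rpow_mul_rpow_le_of_le_mul (hP _ _) (hP _ _) (hP _ _) (hP _ _) (hP _ _) (hP _ _)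
      (sub_nonneg.2 (Nat.floor_le hs)) (by linarith [Nat.lt_floor_add_one s])
      (prod_svalNat_mul_le A B _) (prod_svalNat_mul_le A B _)
  · simp only [phi, if_neg hsd, det_mul, abs_mul, Real.mul_rpow (abs_nonneg _) (abs_nonneg _),
      le_refl]
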